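/- arXiv:2412.00229 — 2 statements merged into one kernel-verified Lean document; each statement's English description precedes it below -/
import Mathlib

section
/- Let q be a real number with q > 1, let n be a natural number, and let a : Fin n → ℂ. Then the product ∏_j (1 − a_j · q^{−s}) is nonzero for every complex number s with Re(s) > 0 if and only if |a_j| ≤ 1 for every j. -/
/-!
For `Re s > 0` the factor `q^{-s}` ranges over the punctured open unit disc, so `1 - a q^{-s}` can
vanish only if `a⁻¹` lies in that disc, i.e. `‖a‖ > 1`; conversely, when `‖a‖ > 1` the exponent
`s = log a / log q` solves `q^{-s} = a⁻¹` and has `Re s = log ‖a‖ / log q > 0`.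
-/

namespace Complex

lemma norm_ofReal_cpow_neg_lt_one {q : ℝ} (hq : 1 < q) {s : ℂ} (hs : 0 < s.re) :
    ‖(q : ℂ) ^ (-s)‖ < 1 := by
  rw [norm_cpow_eq_rpow_re_of_pos (by linarith), neg_re]
  exact Real.rpow_lt_one_of_one_lt_of_neg hq (neg_neg_of_pos hs)

lemma exists_re_pos_ofReal_cpow_neg_eq_inv {q : ℝ} (hq : 1 < q) {a : ℂ} (ha : 1 < ‖a‖) :
    ∃ s : ℂ, 0 < s.re ∧ (q : ℂ) ^ (-s) = a⁻¹ := by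
  have hq0 : 0 < q := by linarith
  have hlog : 0 < Real.log q := Real.log_pos hq
  have ha0 : a ≠ 0 := norm_pos_iff.mp (by linarith)
  refine ⟨log a / Real.log q, ?_, ?_⟩
  · have hre : (log a / Real.log q).re = Real.log ‖a‖ / Real.log q := by
      rw [div_ofReal_re, log_re]
    rw [hre]
    exact div_pos (Real.log_pos ha) hlog
  · have hexp : Real.log q * -(log a / Real.log q) = -log a := by
      field_simp [ofReal_ne_zero.mpr hlog.ne']
    rw [cpow_def_of_ne_zero (ofReal_ne_zero.mpr hq0.ne'), ← ofReal_log hq0.le, hexp, exp_neg,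
      exp_log ha0]

lemma one_sub_mul_ofReal_cpow_neg_ne_zero_iff {q : ℝ} (hq : 1 < q) (a : ℂ) :
    (∀ s : ℂ, 0 < s.re → 1 - a * (q : ℂ) ^ (-s) ≠ 0) ↔ ‖a‖ ≤ 1 := by
  constructor
  · intro h
    by_contra! ha
    obtain ⟨s, hs, hcpow⟩ := exists_re_pos_ofReal_cpow_neg_eq_inv hq ha
    apply h s hs
    rw [hcpow, mul_inv_cancel₀ (norm_pos_iff.mp (by linarith)), sub_self]
  · intro ha s hs hzero
    have hlt : ‖a * (q : ℂ) ^ (-s)‖ < 1 := by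
      rw [norm_mul]
      calc ‖a‖ * ‖(q : ℂ) ^ (-s)‖ ≤ ‖(q : ℂ) ^ (-s)‖ :=
            mul_le_of_le_one_left (norm_nonneg _) ha
        _ < 1 := norm_ofReal_cpow_neg_lt_one hq hs
    rw [← sub_eq_zero.mp hzero, norm_one] at hlt
    exact lt_irrefl 1 hlt

end Complex

/-- Tempered L-function conjecture in explicit terms: the product
`∏ j, (1 - a j * q^{-s})` is nonzero for every `s` with `Re s > 0`
iff every `a j` has absolute value at most `1`. -/
theorem stmt0 (q : ℝ) (hq : 1 < q) (n : ℕ) (a : Fin n → ℂ) :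
    (∀ s : ℂ, 0 < s.re → ∏ j, (1 - a j * (q : ℂ) ^ (-s)) ≠ 0) ↔
      ∀ j, ‖a j‖ ≤ 1 := by
  simp only [Finset.prod_ne_zero_iff, Finset.mem_univ, forall_const,
    ← Complex.one_sub_mul_ofReal_cpow_neg_ne_zero_iff hq]
  exact ⟨fun h j s hs => h s hs j, fun h s hs j => h j s hs⟩
end

section
/- Let q be a real number with q > 1 and let a be a nonzero complex number. Let T_w and T_s be the ℂ-linear endomorphisms of ℂ² defined on the standard basis (e, f) by T_w(e) = f, T_w(f) = q·e + (q−1)·f, and T_s(e) = (q−1)·e + (q/a)·f, T_s(f) = a·e. Then there exists a nonzero vector v ∈ ℂ² that is simultaneously an eigenvector of T_w and of T_s if and only if a ∈ {1, −q, q²}. -/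
/-!
`T_w` has the eigenlines spanned by `(1, 1)` (eigenvalue `q`) and `(-q, 1)` (eigenvalue `-1`);
for `v = (x, y)` this is the factorisation `(x - y) (x + q y) = 0` of the collinearity condition
of `v` and `T_w v`. On these lines the collinearity condition of `v` and `T_s v` becomes
`(a - 1) (a + q) = 0` and `(a - q²) (a + q) = 0` respectively.
-/

theorem LinearMap.apply_fin_two {R M : Type*} [Semiring R] [AddCommMonoid M] [Module R M]
    (f : (Fin 2 → R) →ₗ[R] M) (v : Fin 2 → R) :
    f v = v 0 • f ![1, 0] + v 1 • f ![0, 1] := by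
  rw [← map_smul, ← map_smul, ← map_add]
  congr 1
  ext i
  fin_cases i <;> simp

theorem exists_eq_smul_iff_of_fin_two {K : Type*} [Field K] {v : Fin 2 → K} (hv : v ≠ 0)
    (w : Fin 2 → K) : (∃ μ : K, w = μ • v) ↔ v 0 * w 1 = v 1 * w 0 := by
  constructor
  · rintro ⟨μ, rfl⟩
    simp only [Pi.smul_apply, smul_eq_mul]
    ring
  · intro hcross
    by_cases h0 : v 0 = 0
    · have h1 : v 1 ≠ 0 := fun h1 => hv (funext <| Fin.forall_fin_two.mpr ⟨h0, h1⟩)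
      refine ⟨w 1 / v 1, funext <| Fin.forall_fin_two.mpr ⟨?_, ?_⟩⟩ <;>
        simp only [Pi.smul_apply, smul_eq_mul] <;> field_simp
      · linear_combination -hcross
    · refine ⟨w 0 / v 0, funext <| Fin.forall_fin_two.mpr ⟨?_, ?_⟩⟩ <;>
        simp only [Pi.smul_apply, smul_eq_mul] <;> field_simp
      · linear_combination hcross

section Hecke

variable {K : Type*} [Field K] {q a : K}

theorem eq_one_or_eq_neg_or_eq_sq_of_cross (ha : a ≠ 0) {x y : K} (hy : y ≠ 0)
    (hW : x * (x + (q - 1) * y) = y * (q * y))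
    (hS : x * (q / a * x) = y * ((q - 1) * x + a * y)) :
    a = 1 ∨ a = -q ∨ a = q ^ 2 := by
  have hS' : q * x ^ 2 = a * (q - 1) * x * y + a ^ 2 * y ^ 2 := by
    field_simp at hS
    linear_combination hS
  have hy2 : y ^ 2 ≠ 0 := pow_ne_zero 2 hy
  rcases mul_eq_zero.mp (show (x - y) * (x + q * y) = 0 by linear_combination hW) with h | h
  · rw [sub_eq_zero.mp h] at hS'
    have : (a - 1) * (a + q) * y ^ 2 = 0 := by linear_combination -hS'
    rcases mul_eq_zero.mp ((mul_eq_zero.mp this).resolve_right hy2) with h | h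
    · exact Or.inl (sub_eq_zero.mp h)
    · exact Or.inr (Or.inl (eq_neg_of_add_eq_zero_left h))
  · rw [show x = -q * y by linear_combination h] at hS'
    have : (a - q ^ 2) * (a + q) * y ^ 2 = 0 := by linear_combination -hS'
    rcases mul_eq_zero.mp ((mul_eq_zero.mp this).resolve_right hy2) with h | h
    · exact Or.inr (Or.inr (sub_eq_zero.mp h))
    · exact Or.inr (Or.inl (eq_neg_of_add_eq_zero_left h))

theorem exists_ne_zero_hecke_cross_iff (ha : a ≠ 0) :
    (∃ v : Fin 2 → K, v ≠ 0 ∧ v 0 * (v 0 + (q - 1) * v 1) = v 1 * (q * v 1) ∧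
        v 0 * (q / a * v 0) = v 1 * ((q - 1) * v 0 + a * v 1)) ↔
      a = 1 ∨ a = -q ∨ a = q ^ 2 := by
  constructor
  · rintro ⟨v, hv, hW, hS⟩
    refine eq_one_or_eq_neg_or_eq_sq_of_cross ha (fun hy => hv ?_) hW hS
    have hx : v 0 = 0 := by simpa [hy] using hW
    exact funext <| Fin.forall_fin_two.mpr ⟨hx, hy⟩
  · have hv : ∀ x : K, ![x, 1] ≠ 0 := fun x h => one_ne_zero (congrFun h 1)
    rintro (rfl | rfl | rfl)
    · exact ⟨![1, 1], hv 1, by simp, by simp⟩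
    · have hq : q ≠ 0 := neg_ne_zero.mp ha
      refine ⟨![1, 1], hv 1, ?_, ?_⟩ <;>
        simp only [Matrix.cons_val_zero, Matrix.cons_val_one, Matrix.cons_val_fin_one] <;>
        field_simp <;> ring
    · have hq : q ≠ 0 := by rintro rfl; simp at ha
      refine ⟨![-q, 1], hv (-q), ?_, ?_⟩ <;>
        simp only [Matrix.cons_val_zero, Matrix.cons_val_one, Matrix.cons_val_fin_one] <;>
        field_simp <;> ring

end Hecke

theorem stmt6_general (q : ℝ) (a : ℂ) (ha : a ≠ 0)
    (Tw Ts : Module.End ℂ (Fin 2 → ℂ))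
    (hTwe : Tw ![1, 0] = ![0, 1])
    (hTwf : Tw ![0, 1] = (q : ℂ) • ![1, 0] + ((q : ℂ) - 1) • ![0, 1])
    (hTse : Ts ![1, 0] = ((q : ℂ) - 1) • ![1, 0] + ((q : ℂ) / a) • ![0, 1])
    (hTsf : Ts ![0, 1] = a • ![1, 0]) :
    (∃ v : Fin 2 → ℂ, v ≠ 0 ∧ (∃ μ : ℂ, Tw v = μ • v) ∧ (∃ ν : ℂ, Ts v = ν • v)) ↔
      a ∈ ({1, -(q : ℂ), (q : ℂ) ^ 2} : Set ℂ) := by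
  have hTw (v : Fin 2 → ℂ) : Tw v = ![q * v 1, v 0 + (q - 1) * v 1] := by
    rw [Tw.apply_fin_two, hTwe, hTwf]
    ext i; fin_cases i <;> simp [mul_comm]
  have hTs (v : Fin 2 → ℂ) : Ts v = ![(q - 1) * v 0 + a * v 1, q / a * v 0] := by
    rw [Ts.apply_fin_two, hTse, hTsf]
    ext i; fin_cases i <;> simp [mul_comm]
  simp only [hTw, hTs, Set.mem_insert_iff, Set.mem_singleton_iff]
  rw [← exists_ne_zero_hecke_cross_iff ha]
  refine exists_congr fun v => and_congr_right fun hv => ?_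
  simp only [exists_eq_smul_iff_of_fin_two hv, Matrix.cons_val_zero, Matrix.cons_val_one]

/-- Reducibility criterion for unramified principal series of `SL₂`:
the Hecke operators `T_w` (`e ↦ f`, `f ↦ q e + (q-1) f`) and
`T_s` (`e ↦ (q-1) e + (q/a) f`, `f ↦ a e`) have a common eigenvector
iff `a ∈ {1, -q, q²}`. -/
theorem stmt6 (q : ℝ) (hq : 1 < q) (a : ℂ) (ha : a ≠ 0)
    (Tw Ts : Module.End ℂ (Fin 2 → ℂ))
    (hTwe : Tw ![1, 0] = ![0, 1])
    (hTwf : Tw ![0, 1] = (q : ℂ) • ![1, 0] + ((q : ℂ) - 1) • ![0, 1])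
    (hTse : Ts ![1, 0] = ((q : ℂ) - 1) • ![1, 0] + ((q : ℂ) / a) • ![0, 1])
    (hTsf : Ts ![0, 1] = a • ![1, 0]) :
    (∃ v : Fin 2 → ℂ, v ≠ 0 ∧ (∃ μ : ℂ, Tw v = μ • v) ∧ (∃ ν : ℂ, Ts v = ν • v)) ↔
      a ∈ ({1, -(q : ℂ), (q : ℂ) ^ 2} : Set ℂ) :=
  stmt6_general q a ha Tw Ts hTwe hTwf hTse hTsf
end
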